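/- arXiv:2202.05147 — 3 statements merged into one kernel-verified Lean document; each statement's English description precedes it below -/
import Mathlib

section
/- Set p̄₀ := ⌊1 + C̄₀/c̄₀⌋ + 2, where C̄₀, c̄₀ are the constants of the multi-bubble energy estimate. Then there exists λ̂ > 0 such that for every λ ≥ λ̂ and every σ ∈ B_{p̄₀}(M), J_q(f_{p̄₀}(λ)(σ)) ≤ p̄₀^{2/3}·S; that is, f_{p̄₀}(λ)(B_{p̄₀}(M)) ⊂ W_{p̄₀−1}. -/
open MeasureTheory Metric Set Filter Topology Bornology
open scoped InnerProductSpace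

noncomputable section

/-- Euclidean three-space. -/
abbrev E3 : Type := EuclideanSpace ℝ (Fin 3)

/-- The Euclidean Laplacian of `f : E3 → ℝ`, as the sum of the pure second
derivatives in the coordinate directions. -/
def lap (f : E3 → ℝ) (x : E3) : ℝ :=
  ∑ i : Fin 3, iteratedFDeriv ℝ 2 f x (fun _ => EuclideanSpace.single i (1 : ℝ))

/-- The standard bubble `δ_{a,λ}(x) = c₀ (λ/(1+λ²|x-a|²))^{1/2}`. -/
def stdBubble (c₀ : ℝ) (a : E3) (l : ℝ) (x : E3) : ℝ :=
  c₀ * Real.sqrt (l / (1 + l ^ 2 * ‖x - a‖ ^ 2))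

/-- The Brendle–Schoen bubble
`u_{a,λ,δ} = χ^a_δ δ_{a,λ} + (1 - χ^a_δ) c₀ G(a,·)/√λ`. -/
def bsBubble (c₀ : ℝ) (χ : ℝ → ℝ) (G : E3 → E3 → ℝ) (δ : ℝ) (a : E3) (l : ℝ) (x : E3) : ℝ :=
  χ (‖x - a‖ / δ) * stdBubble c₀ a l x
    + (1 - χ (‖x - a‖ / δ)) * (c₀ / Real.sqrt l) * G a x

/-- The interaction quantity
`ε_{ij} = [λᵢ/λⱼ + λⱼ/λᵢ + λᵢλⱼ G(ai,aj)⁻²]^{-1/2}`. -/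
def epsParam (G : E3 → E3 → ℝ) (a₁ a₂ : E3) (l₁ l₂ : ℝ) : ℝ :=
  Real.sqrt (1 / (l₁ / l₂ + l₂ / l₁ + l₁ * l₂ / (G a₁ a₂) ^ 2))

/-- `ϱ₀ = dist(K, ∂Ω)/4`. -/
def rho0 (Ω K : Set E3) : ℝ :=
  sInf {d : ℝ | ∃ x ∈ K, ∃ y ∈ frontier Ω, d = dist x y} / 4

/-- The scalar product `⟨u,v⟩_q = ∫_Ω (⟨∇u,∇v⟩ + q u v)`. -/
def innerQ (Ω : Set E3) (q : E3 → ℝ) (u v : E3 → ℝ) : ℝ :=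
  ∫ x in Ω, (⟪gradient u x, gradient v x⟫_ℝ + q x * u x * v x)

/-- The norm `‖u‖_q = (∫_Ω (|∇u|² + q u²))^{1/2}`. -/
def normQ (Ω : Set E3) (q : E3 → ℝ) (u : E3 → ℝ) : ℝ :=
  Real.sqrt (innerQ Ω q u u)

/-- The Brezis–Nirenberg functional `J_q(u) = ⟨u,u⟩_q / (∫_Ω u⁶)^{1/3}`. -/
def Jq (Ω : Set E3) (q : E3 → ℝ) (u : E3 → ℝ) : ℝ :=
  innerQ Ω q u u / (∫ x in Ω, (u x) ^ 6) ^ ((1 : ℝ) / 3)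

/-- The best Sobolev constant `S` of `ℝ³`:
`S = inf {∫ |∇u|² / (∫ u⁶)^{1/3} : u ∈ D¹(ℝ³), u ≠ 0}`. -/
def sobolevS : ℝ :=
  sInf {r : ℝ | ∃ u : E3 → ℝ, u ≠ 0 ∧ MeasureTheory.MemLp u 6 MeasureTheory.volume ∧
    MeasureTheory.MemLp (fun x => ‖gradient u x‖) 2 MeasureTheory.volume ∧
    r = (∫ x, ‖gradient u x‖ ^ 2) / (∫ x, (u x) ^ 6) ^ ((1 : ℝ) / 3)}

/-- The constant `c₃ = ∫_{ℝ³} (1/(1+|y|²))^{5/2} dy`. -/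
def cThree : ℝ := ∫ y : E3, (1 / (1 + ‖y‖ ^ 2)) ^ ((5 : ℝ) / 2)

/-- The derivative of `J_q` at `u` in the direction `v`. -/
def dJq (Ω : Set E3) (q : E3 → ℝ) (u v : E3 → ℝ) : ℝ :=
  (2 / (∫ x in Ω, (u x) ^ 6) ^ ((1 : ℝ) / 3)) *
    (innerQ Ω q u v - (innerQ Ω q u u / ∫ x in Ω, (u x) ^ 6) * ∫ x in Ω, (u x) ^ 5 * v x)

/-- The set `H^{1,+}₀(Ω)` of admissible nonnegative functions vanishing on `∂Ω`. -/
def Hplus (Ω : Set E3) : Set (E3 → ℝ) :=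
  {u | (∀ x, 0 ≤ u x) ∧ u ≠ 0 ∧ ∀ x ∈ frontier Ω, u x = 0}

/-- The sublevel set `W_p = {u ∈ H^{1,+}₀(Ω) : J_q(u) ≤ (p+1)^{2/3} S}`. -/
def Wset (Ω : Set E3) (q : E3 → ℝ) (p : ℕ) : Set (E3 → ℝ) :=
  {u | u ∈ Hplus Ω ∧ Jq Ω q u ≤ ((p : ℝ) + 1) ^ ((2 : ℝ) / 3) * sobolevS}

/-- The neighborhood `V(p, ε)` of potential critical points at infinity. -/
def Vset (Ω : Set E3) (q : E3 → ℝ) (c₀ : ℝ) (χ : ℝ → ℝ) (G : E3 → E3 → ℝ)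
    (δ ν₀ : ℝ) (p : ℕ) (ε : ℝ) : Set (E3 → ℝ) :=
  {u | u ∈ Hplus Ω ∧ ∃ (a : Fin p → E3) (α l : Fin p → ℝ),
    (∀ i, a i ∈ Ω) ∧ (∀ i, 0 < α i) ∧ (∀ i, 0 < l i) ∧
    (∀ i, 1 / ε ≤ l i) ∧ (∀ i, 1 / ε ≤ l i * infDist (a i) (frontier Ω)) ∧
    normQ Ω q (fun x => u x - ∑ i, α i * bsBubble c₀ χ G δ (a i) (l i) x) ≤ ε ∧
    ∀ i j, i ≠ j → α i / α j ≤ ν₀ ∧ epsParam G (a i) (a j) (l i) (l j) ≤ ε}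

/-- Lemma 6.6: for `p̄₀ = ⌊1 + C̄₀/c̄₀⌋ + 2`, the barycenter map
`f_{p̄₀}(λ)` takes values in the sublevel set `W_{p̄₀ - 1}` for `λ` large. -/
theorem high_order_barycenter_low_energy
    (Ω : Set E3) (hΩo : IsOpen Ω) (hΩb : IsBounded Ω)
    (q : E3 → ℝ) (hq_smooth : ContDiffOn ℝ (⊤ : ℕ∞) q Ω) (hq_bdd : ∃ M : ℝ, ∀ x ∈ Ω, |q x| ≤ M)
    (hev : ∃ c > (0 : ℝ), ∀ v : E3 → ℝ, ContDiff ℝ (⊤ : ℕ∞) v → tsupport v ⊆ Ω →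
      c * ∫ x in Ω, (v x) ^ 2 ≤ ∫ x in Ω, (‖gradient v x‖ ^ 2 + q x * (v x) ^ 2))
    (c₀ : ℝ) (hc₀ : 0 < c₀)
    (hbubble : ∀ (a : E3) (l : ℝ), 0 < l → ∀ x : E3,
      -lap (stdBubble c₀ a l) x = (stdBubble c₀ a l x) ^ 5)
    (G : E3 → E3 → ℝ)
    (hGpos : ∀ a ∈ Ω, ∀ x ∈ Ω, 0 < G a x)
    (hGpde : ∀ a ∈ Ω, ∀ x ∈ Ω, x ≠ a → -lap (G a) x + q x * G a x = 0)
    (hGbdry : ∀ a ∈ Ω, ∀ x ∈ frontier Ω, G a x = 0)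
    (hGest : ∃ C₁ > (0 : ℝ), ∀ a ∈ Ω, ∀ x ∈ Ω, x ≠ a →
      |G a x - 1 / ‖x - a‖| ≤ C₁ ∧
      ‖gradient (fun y => G a y - 1 / ‖y - a‖) x‖ ≤ C₁ / ‖x - a‖)
    (χ : ℝ → ℝ) (hχ : ContDiff ℝ (⊤ : ℕ∞) χ) (hχ01 : ∀ t : ℝ, χ t ∈ Icc (0 : ℝ) 1)
    (hχ1 : ∀ t : ℝ, t ≤ 1 → χ t = 1) (hχ0 : ∀ t : ℝ, 2 ≤ t → χ t = 0)
    (M : Type) [TopologicalSpace M] [CompactSpace M] [ConnectedSpace M]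
    (h : M → E3) (hh : Continuous h)
    (K₀ : Set E3) (hK₀ : IsCompact K₀) (hK₀Ω : K₀ ⊆ Ω) (hhK₀ : range h ⊆ K₀)
    (δ : ℝ) (hδ : 0 < δ) (hδρ : 2 * δ ≤ rho0 Ω K₀)
    (ε₀ ν₀ : ℝ) (hε₀ : 0 < ε₀) (hν₀ : 1 < ν₀)
    (C₀ cs₀ : ℝ) (hC₀ : 0 < C₀) (hcs₀ : 0 < cs₀)
    -- the multi-bubble energy estimate with the constants `C₀ = C̄₀` and `cs₀ = c̄₀`
    (hEst : ∀ p : ℕ, 2 ≤ p → ∀ ε : ℝ, 0 < ε → ε ≤ ε₀ →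
      ∃ lp : ℝ, 0 < lp ∧ ∀ l : ℝ, lp ≤ l →
      ∀ (a : Fin p → M) (α : Fin p → ℝ), (∀ i, 0 ≤ α i) → (∑ i, α i) = 1 →
      (((∑ i : Fin p, ∑ j : Fin p,
            if i = j then 0 else epsParam G (h (a i)) (h (a j)) l l) > ε ∨
          ∃ i j : Fin p, i ≠ j ∧ α i / α j > ν₀) →
        Jq Ω q (fun x => ∑ i, α i * bsBubble c₀ χ G δ (h (a i)) l x) ≤
          (p : ℝ) ^ ((2 : ℝ) / 3) * sobolevS) ∧
      (((∑ i : Fin p, ∑ j : Fin p,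
            if i = j then 0 else epsParam G (h (a i)) (h (a j)) l l) ≤ ε ∧
          ∀ i j : Fin p, i ≠ j → α i / α j ≤ ν₀) →
        Jq Ω q (fun x => ∑ i, α i * bsBubble c₀ χ G δ (h (a i)) l x) ≤
          (p : ℝ) ^ ((2 : ℝ) / 3) * sobolevS *
            (1 + C₀ / l - cs₀ * ((p : ℝ) - 1) / l))) :
    ∃ lhat : ℝ, 0 < lhat ∧ ∀ l : ℝ, lhat ≤ l →
      ∀ (a : Fin (⌊1 + C₀ / cs₀⌋.toNat + 2) → M)
        (α : Fin (⌊1 + C₀ / cs₀⌋.toNat + 2) → ℝ),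
        (∀ i, 0 ≤ α i) → (∑ i, α i) = 1 →
        Jq Ω q (fun x => ∑ i, α i * bsBubble c₀ χ G δ (h (a i)) l x) ≤
          ((⌊1 + C₀ / cs₀⌋.toNat + 2 : ℕ) : ℝ) ^ ((2 : ℝ) / 3) * sobolevS := by
  classical
  set p : ℕ := ⌊1 + C₀ / cs₀⌋.toNat + 2 with hp
  have hp2 : 2 ≤ p := by omega
  obtain ⟨lp, hlp, H⟩ := hEst p hp2 ε₀ hε₀ le_rfl
  refine ⟨max lp 1, lt_of_lt_of_le one_pos (le_max_right _ _), ?_⟩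
  intro l hl a α hα hsum
  have hl1 : (1 : ℝ) ≤ l := le_trans (le_max_right _ _) hl
  have hlpos : (0 : ℝ) < l := lt_of_lt_of_le one_pos hl1
  obtain ⟨H1, H2⟩ := H l (le_trans (le_max_left _ _) hl) a α hα hsum
  by_cases hc : ((∑ i : Fin p, ∑ j : Fin p,
        if i = j then 0 else epsParam G (h (a i)) (h (a j)) l l) > ε₀ ∨
      ∃ i j : Fin p, i ≠ j ∧ α i / α j > ν₀)
  · exact H1 hc
  · push_neg at hc
    obtain ⟨hc1, hc2⟩ := hc
    have hJ := H2 ⟨hc1, hc2⟩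
    -- `sobolevS ≥ 0`
    have hS : 0 ≤ sobolevS := by
      apply Real.sInf_nonneg
      rintro r ⟨u, -, -, -, rfl⟩
      apply div_nonneg
      · exact integral_nonneg fun x => sq_nonneg _
      · exact Real.rpow_nonneg (integral_nonneg fun x => by positivity) _
    have hPS : 0 ≤ ((p : ℝ)) ^ ((2 : ℝ) / 3) * sobolevS :=
      mul_nonneg (Real.rpow_nonneg (Nat.cast_nonneg _) _) hS
    -- the factor is at most 1
    have hx : (1 : ℝ) + C₀ / cs₀ ≤ (p : ℝ) - 1 := by
      have h0 : (0 : ℝ) < 1 + C₀ / cs₀ := by positivity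
      have hfl : ((⌊1 + C₀ / cs₀⌋.toNat : ℤ) : ℝ) = ((⌊1 + C₀ / cs₀⌋ : ℤ) : ℝ) := by
        exact_mod_cast congrArg (fun z : ℤ => (z : ℝ))
          (Int.toNat_of_nonneg (Int.floor_nonneg.mpr h0.le))
      have hlt := Int.lt_floor_add_one (1 + C₀ / cs₀)
      have : (p : ℝ) = (⌊1 + C₀ / cs₀⌋.toNat : ℝ) + 2 := by
        simp [hp]
      rw [this]
      push_cast at hfl ⊢
      nlinarith [hfl, hlt]
    have hfac : 1 + C₀ / l - cs₀ * ((p : ℝ) - 1) / l ≤ 1 := by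
      have hnum : C₀ ≤ cs₀ * ((p : ℝ) - 1) := by
        have : C₀ / cs₀ ≤ (p : ℝ) - 1 := by nlinarith
        calc C₀ = cs₀ * (C₀ / cs₀) := by field_simp
          _ ≤ cs₀ * ((p : ℝ) - 1) := by nlinarith
      have : C₀ / l ≤ cs₀ * ((p : ℝ) - 1) / l :=
        by gcongr
      linarith
    calc Jq Ω q (fun x => ∑ i, α i * bsBubble c₀ χ G δ (h (a i)) l x)
        ≤ (p : ℝ) ^ ((2 : ℝ) / 3) * sobolevS * (1 + C₀ / l - cs₀ * ((p : ℝ) - 1) / l) := hJ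
      _ ≤ (p : ℝ) ^ ((2 : ℝ) / 3) * sobolevS * 1 := by
          exact mul_le_mul_of_nonneg_left hfac hPS
      _ = ((p : ℕ) : ℝ) ^ ((2 : ℝ) / 3) * sobolevS := by ring
end
end

section
/- Let K ⊂ Ω be compact and θ > 0 be small. Then there exists C > 0 such that for all a_i, a_j ∈ K, all δ with 0 < 2δ < ϱ₀, and all λ_i, λ_j with 0 < 1/λ_i ≤ θδ and 0 < 1/λ_j ≤ θδ, one has ∫_{Ω ∖ B(a_j,δ)} u_{a_j,λ_j}⁵ u_{a_i,λ_i} ≤ C·λ_j^{−5/2}·λ_i^{−1/2}·δ^{−6}. -/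
open MeasureTheory Metric Set Filter Topology Bornology
open scoped InnerProductSpace

noncomputable section

namespace OuterAux

lemma abs_coord_le_norm (y : E3) (i : Fin 3) : |y i| ≤ ‖y‖ := by
  have h : Real.sqrt ((y i) ^ 2) ≤ Real.sqrt (∑ j, ‖y j‖ ^ 2) := by
    apply Real.sqrt_le_sqrt
    calc (y i) ^ 2 = ‖y i‖ ^ 2 := by rw [Real.norm_eq_abs, sq_abs]
      _ ≤ ∑ j, ‖y j‖ ^ 2 := Finset.single_le_sum (f := fun j => ‖y j‖ ^ 2) (fun j _ => sq_nonneg _) (Finset.mem_univ i)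
  rwa [Real.sqrt_sq_eq_abs, ← EuclideanSpace.norm_eq] at h

lemma integrableOn_abs_rpow {r₀ : ℝ} (hr : 0 ≤ r₀) :
    IntegrableOn (fun t : ℝ => |t| ^ (-(1/3) : ℝ)) (Icc (-r₀) r₀) volume := by
  have hpos : IntegrableOn (fun t : ℝ => |t| ^ (-(1/3) : ℝ)) (Ioc 0 r₀) volume := by
    have h1 : IntervalIntegrable (fun t : ℝ => t ^ (-(1/3) : ℝ)) volume 0 r₀ :=
      intervalIntegral.intervalIntegrable_rpow' (by norm_num)
    have h2 : IntegrableOn (fun t : ℝ => t ^ (-(1/3) : ℝ)) (Ioc 0 r₀) volume :=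
      (intervalIntegrable_iff_integrableOn_Ioc_of_le hr).1 h1
    exact h2.congr_fun (fun t ht => by rw [abs_of_pos ht.1]) measurableSet_Ioc
  have hneg : IntegrableOn (fun t : ℝ => |t| ^ (-(1/3) : ℝ)) (Ico (-r₀) 0) volume := by
    have h3 : Integrable
        (fun t : ℝ => Set.indicator (Ioc 0 r₀) (fun s : ℝ => |s| ^ (-(1/3):ℝ)) (-t)) volume :=
      ((integrable_indicator_iff measurableSet_Ioc).2 hpos).comp_neg
    have h4 : ∀ t : ℝ, Set.indicator (Ioc 0 r₀) (fun s : ℝ => |s| ^ (-(1/3):ℝ)) (-t)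
        = Set.indicator (Ico (-r₀) 0) (fun s : ℝ => |s| ^ (-(1/3):ℝ)) t := by
      intro t
      by_cases h : -t ∈ Ioc 0 r₀
      · rw [Set.indicator_of_mem h, Set.indicator_of_mem
          (by constructor <;> [linarith [h.2]; linarith [h.1]]), abs_neg]
      · rw [Set.indicator_of_notMem h, Set.indicator_of_notMem
          (fun hc => h ⟨by linarith [hc.2], by linarith [hc.1]⟩)]
    rw [← integrable_indicator_iff measurableSet_Ico]
    exact h3.congr (Eventually.of_forall h4)
  have hunion := hneg.union hpos
  apply hunion.mono_set_ae
  rw [ae_le_set]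
  apply measure_mono_null (t := {(0:ℝ)}) ?_ (measure_singleton (0:ℝ))
  intro t ht
  simp only [mem_diff, mem_Icc, mem_union, mem_Ico, mem_Ioc, not_or, mem_singleton_iff] at ht ⊢
  rcases ht with ⟨⟨h1, h2⟩, h3, h4⟩
  by_contra h0
  rcases lt_or_gt_of_ne h0 with h | h
  · exact h3 ⟨h1, h⟩
  · exact h4 ⟨h, h2⟩

def boxFn (r₀ : ℝ) : E3 → ℝ :=
  fun x => ∏ i, Set.indicator (Icc (-r₀) r₀) (fun t : ℝ => |t| ^ (-(1/3):ℝ)) (x i)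

lemma boxFn_nonneg (r₀ : ℝ) (x : E3) : 0 ≤ boxFn r₀ x :=
  Finset.prod_nonneg fun i _ =>
    Set.indicator_nonneg (fun t _ => Real.rpow_nonneg (abs_nonneg t) _) _

lemma integrable_boxFn {r₀ : ℝ} (hr : 0 ≤ r₀) : Integrable (boxFn r₀) volume := by
  have h1 : Integrable
      (Set.indicator (Icc (-r₀) r₀) (fun t : ℝ => |t| ^ (-(1/3):ℝ))) volume :=
    (integrable_indicator_iff measurableSet_Icc).2 (integrableOn_abs_rpow hr)
  have h2 : Integrable (fun y : Fin 3 → ℝ =>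
      ∏ i, Set.indicator (Icc (-r₀) r₀) (fun t : ℝ => |t| ^ (-(1/3):ℝ)) (y i)) volume :=
    Integrable.fintype_prod (fun _ => h1)
  exact ((EuclideanSpace.volume_preserving_symm_measurableEquiv_toLp (Fin 3)).integrable_comp_emb
    (MeasurableEquiv.toLp 2 (Fin 3 → ℝ)).symm.measurableEmbedding).2 h2

lemma inv_norm_le_boxFn {r₀ : ℝ} (y : E3) (hy : ∀ i, y i ≠ 0) (hnorm : ‖y‖ ≤ r₀) :
    ‖y‖⁻¹ ≤ boxFn r₀ y := by
  have hy0 : y ≠ 0 := fun h => hy 0 (by rw [h]; rfl)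
  have hn0 : 0 < ‖y‖ := norm_pos_iff.2 hy0
  have hcoord : ∀ i, |y i| ≤ r₀ := fun i => (abs_coord_le_norm y i).trans hnorm
  have hbox : boxFn r₀ y = ∏ i, |y i| ^ (-(1/3):ℝ) := by
    apply Finset.prod_congr rfl
    intro i _
    exact Set.indicator_of_mem (by rw [mem_Icc]; exact abs_le.1 (hcoord i)) (fun t : ℝ => |t| ^ (-(1/3):ℝ))
  have hprodpos : 0 < ∏ i, |y i| := Finset.prod_pos fun i _ => abs_pos.2 (hy i)
  have hle : ∏ i, |y i| ≤ ‖y‖ ^ (3:ℕ) := by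
    calc ∏ i, |y i| ≤ ∏ _i : Fin 3, ‖y‖ :=
          Finset.prod_le_prod (fun i _ => abs_nonneg _) (fun i _ => abs_coord_le_norm y i)
      _ = ‖y‖ ^ (3:ℕ) := by simp
  have hmono := Real.rpow_le_rpow_of_nonpos hprodpos hle (by norm_num : (-(1/3):ℝ) ≤ 0)
  have heq : (‖y‖ ^ (3:ℕ) : ℝ) ^ (-(1/3):ℝ) = ‖y‖⁻¹ := by
    rw [← Real.rpow_natCast ‖y‖ 3, ← Real.rpow_mul hn0.le]
    norm_num [Real.rpow_neg_one]
  have hprodeq : (∏ i, |y i| ^ (-(1/3):ℝ)) = ((∏ i, |y i|) : ℝ) ^ (-(1/3):ℝ) :=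
    Real.finset_prod_rpow _ _ (fun i _ => abs_nonneg _) _
  rw [hbox, hprodeq, ← heq]
  exact hmono

lemma null_coord (i : Fin 3) (c : ℝ) : volume {x : E3 | x i = c} = 0 := by
  set S : Submodule ℝ E3 := LinearMap.ker (EuclideanSpace.projₗ i) with hSdef
  have hS : S ≠ ⊤ := by
    intro h
    have h1 : EuclideanSpace.single i (1:ℝ) ∈ S := h ▸ Submodule.mem_top
    rw [hSdef, LinearMap.mem_ker] at h1
    simp [EuclideanSpace.projₗ] at h1
  have h0 : volume (S : Set E3) = 0 := Measure.addHaar_submodule volume S hS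
  have hset : {x : E3 | x i = c}
      = (fun x : E3 => x + EuclideanSpace.single i (-c))⁻¹' (S : Set E3) := by
    ext x
    simp only [mem_setOf_eq, mem_preimage, SetLike.mem_coe, hSdef, LinearMap.mem_ker]
    constructor
    · intro h; simp [EuclideanSpace.projₗ, h]
    · intro h; simp [EuclideanSpace.projₗ] at h; linarith
  rw [hset, measure_preimage_add_right]
  exact h0

lemma ae_coords (a : E3) : ∀ᵐ x : E3, ∀ i, x i ≠ a i := by
  rw [MeasureTheory.ae_all_iff]
  intro i
  rw [ae_iff]
  simpa using null_coord i (a i)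

end OuterAux

open OuterAux

/-- interaction integral outside the ball `B(aj, δ)` is
`O(λⱼ^{-5/2} λᵢ^{-1/2} δ⁻⁶)`. -/
theorem outer_interaction_estimate
    (Ω : Set E3) (hΩo : IsOpen Ω) (hΩb : IsBounded Ω)
    (q : E3 → ℝ) (hq_smooth : ContDiffOn ℝ (⊤ : ℕ∞) q Ω) (hq_bdd : ∃ M : ℝ, ∀ x ∈ Ω, |q x| ≤ M)
    (hev : ∃ c > (0 : ℝ), ∀ v : E3 → ℝ, ContDiff ℝ (⊤ : ℕ∞) v → tsupport v ⊆ Ω →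
      c * ∫ x in Ω, (v x) ^ 2 ≤ ∫ x in Ω, (‖gradient v x‖ ^ 2 + q x * (v x) ^ 2))
    (c₀ : ℝ) (hc₀ : 0 < c₀)
    (hbubble : ∀ (a : E3) (l : ℝ), 0 < l → ∀ x : E3,
      -lap (stdBubble c₀ a l) x = (stdBubble c₀ a l x) ^ 5)
    (G : E3 → E3 → ℝ)
    (hGpos : ∀ a ∈ Ω, ∀ x ∈ Ω, 0 < G a x)
    (hGpde : ∀ a ∈ Ω, ∀ x ∈ Ω, x ≠ a → -lap (G a) x + q x * G a x = 0)
    (hGbdry : ∀ a ∈ Ω, ∀ x ∈ frontier Ω, G a x = 0)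
    (hGest : ∃ C₁ > (0 : ℝ), ∀ a ∈ Ω, ∀ x ∈ Ω, x ≠ a →
      |G a x - 1 / ‖x - a‖| ≤ C₁ ∧
      ‖gradient (fun y => G a y - 1 / ‖y - a‖) x‖ ≤ C₁ / ‖x - a‖)
    (χ : ℝ → ℝ) (hχ : ContDiff ℝ (⊤ : ℕ∞) χ) (hχ01 : ∀ t : ℝ, χ t ∈ Icc (0 : ℝ) 1)
    (hχ1 : ∀ t : ℝ, t ≤ 1 → χ t = 1) (hχ0 : ∀ t : ℝ, 2 ≤ t → χ t = 0)
    (K : Set E3) (hK : IsCompact K) (hKΩ : K ⊆ Ω)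
    :
    ∃ θ > (0 : ℝ), ∃ C > (0 : ℝ), ∀ ai ∈ K, ∀ aj ∈ K, ∀ δ : ℝ, 0 < δ → 2 * δ < rho0 Ω K →
      ∀ li lj : ℝ, 0 < li → 0 < lj → 1 / li ≤ θ * δ → 1 / lj ≤ θ * δ →
      (∫ x in Ω \ Metric.ball aj δ,
          (bsBubble c₀ χ G δ aj lj x) ^ 5 * bsBubble c₀ χ G δ ai li x) ≤
        C / (lj ^ ((5 : ℝ) / 2) * Real.sqrt li * δ ^ 6) := by
  obtain ⟨C₁, hC₁, hG⟩ := hGest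
  obtain ⟨R₀, hR₀⟩ := hΩb.subset_closedBall 0
  set R : ℝ := max R₀ 1 with hRdef
  have hR1 : (1:ℝ) ≤ R := le_max_right _ _
  have hRpos : (0:ℝ) < R := lt_of_lt_of_le one_pos hR1
  have hΩR : ∀ x ∈ Ω, ‖x‖ ≤ R := fun x hx =>
    le_trans (by simpa using hR₀ hx) (le_max_left _ _)
  have hdiam : ∀ x ∈ Ω, ∀ a ∈ Ω, ‖x - a‖ ≤ 2 * R := fun x hx a ha => by
    calc ‖x - a‖ ≤ ‖x‖ + ‖a‖ := norm_sub_le _ _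
      _ ≤ 2 * R := by linarith [hΩR x hx, hΩR a ha]
  set B : ℝ := c₀ * (1 + C₁ * (2 * R)) with hBdef
  have hBaux : (0:ℝ) < 1 + C₁ * (2 * R) := by nlinarith
  have hBpos : 0 < B := mul_pos hc₀ hBaux
  have hc₀B : c₀ ≤ B := by rw [hBdef]; nlinarith [mul_nonneg hc₀.le (mul_nonneg hC₁.le (by linarith : (0:ℝ) ≤ 2 * R))]
  -- pointwise bound on bubbles
  have hbub_le : ∀ a ∈ Ω, ∀ l : ℝ, 0 < l → ∀ δ' : ℝ, ∀ x ∈ Ω, x ≠ a →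
      bsBubble c₀ χ G δ' a l x ≤ B / (Real.sqrt l * ‖x - a‖) := by
    intro a ha l hl δ' x hx hxa
    have hrpos : 0 < ‖x - a‖ := norm_pos_iff.2 (sub_ne_zero_of_ne hxa)
    have hrR : ‖x - a‖ ≤ 2 * R := hdiam x hx a ha
    have hsl : 0 < Real.sqrt l := Real.sqrt_pos.2 hl
    set r : ℝ := ‖x - a‖ with hr
    have hstd : stdBubble c₀ a l x ≤ c₀ / (Real.sqrt l * r) := by
      unfold stdBubble
      have h1 : l / (1 + l^2 * ‖x - a‖^2) ≤ 1 / (l * r^2) := by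
        rw [div_le_div_iff₀ (by positivity) (by positivity)]
        nlinarith [sq_nonneg (l * r)]
      calc c₀ * Real.sqrt (l / (1 + l ^ 2 * ‖x - a‖ ^ 2))
          ≤ c₀ * Real.sqrt (1 / (l * r^2)) :=
            mul_le_mul_of_nonneg_left (Real.sqrt_le_sqrt h1) hc₀.le
        _ = c₀ / (Real.sqrt l * r) := by
            rw [one_div, Real.sqrt_inv, Real.sqrt_mul hl.le, Real.sqrt_sq hrpos.le,
              div_eq_mul_inv]
    have hstd' : stdBubble c₀ a l x ≤ B / (Real.sqrt l * r) := by
      refine hstd.trans ?_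
      apply div_le_div_of_nonneg_right ?_ (by positivity)
      exact hc₀B
    have hGb : (1 - χ (‖x - a‖ / δ')) * (c₀ / Real.sqrt l) * G a x
        ≤ (1 - χ (‖x - a‖ / δ')) * (B / (Real.sqrt l * r)) := by
      have h2 : G a x ≤ 1/r + C₁ := by
        have habs := abs_le.1 (hG a ha x hx hxa).1
        linarith [habs.2]
      have h3 : 1/r + C₁ ≤ (1 + C₁ * (2 * R)) / r := by
        rw [div_add' _ _ _ hrpos.ne', div_le_div_iff₀ hrpos hrpos]
        nlinarith [mul_nonneg (mul_nonneg hC₁.le hrpos.le) (by linarith : (0:ℝ) ≤ 2 * R - r)]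
      have h4 : (c₀ / Real.sqrt l) * G a x ≤ B / (Real.sqrt l * r) := by
        calc (c₀ / Real.sqrt l) * G a x ≤ (c₀ / Real.sqrt l) * ((1 + C₁ * (2 * R)) / r) :=
              mul_le_mul_of_nonneg_left (h2.trans h3) (by positivity)
          _ = B / (Real.sqrt l * r) := by rw [hBdef]; field_simp; try ring
      rw [mul_assoc]
      exact mul_le_mul_of_nonneg_left h4 (by linarith [(hχ01 (‖x - a‖ / δ')).2])
    have h5 : χ (‖x - a‖ / δ') * stdBubble c₀ a l x
        ≤ χ (‖x - a‖ / δ') * (B / (Real.sqrt l * r)) :=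
      mul_le_mul_of_nonneg_left hstd' (hχ01 (‖x - a‖ / δ')).1
    unfold bsBubble
    calc χ (‖x - a‖ / δ') * stdBubble c₀ a l x
        + (1 - χ (‖x - a‖ / δ')) * (c₀ / Real.sqrt l) * G a x
        ≤ χ (‖x - a‖ / δ') * (B / (Real.sqrt l * r))
          + (1 - χ (‖x - a‖ / δ')) * (B / (Real.sqrt l * r)) := add_le_add h5 hGb
      _ = B / (Real.sqrt l * r) := by ring
  have hbub_nonneg : ∀ a ∈ Ω, ∀ l : ℝ, 0 < l → ∀ δ' : ℝ, ∀ x ∈ Ω,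
      0 ≤ bsBubble c₀ χ G δ' a l x := by
    intro a ha l hl δ' x hx
    have h1 := hχ01 (‖x - a‖ / δ')
    unfold bsBubble stdBubble
    have hGx := (hGpos a ha x hx).le
    have hsl : 0 ≤ Real.sqrt l := Real.sqrt_nonneg l
    apply add_nonneg
    · exact mul_nonneg h1.1 (by positivity)
    · exact mul_nonneg (mul_nonneg (by linarith [h1.2]) (by positivity)) hGx
  -- constants
  set r₀ : ℝ := 2 * R + 1 with hr₀def
  have hr₀ : (0:ℝ) ≤ r₀ := by positivity
  set I0 : ℝ := ∫ x : E3, boxFn r₀ x with hI0def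
  have hI0 : 0 ≤ I0 := integral_nonneg (boxFn_nonneg r₀)
  set ρB : ℝ := max (rho0 Ω K) 1 with hρBdef
  have hρB1 : (1:ℝ) ≤ ρB := le_max_right _ _
  refine ⟨1, one_pos, B^6 * I0 * ρB + 1, by nlinarith [mul_nonneg (mul_nonneg (pow_pos hBpos 6).le hI0) (le_trans zero_le_one hρB1)], ?_⟩
  intro ai hai aj haj δ hδ hδρ li lj hli hlj _ _
  set C : ℝ := B^6 * I0 * ρB + 1 with hCdef
  have hδρB : δ ≤ ρB := by
    have : rho0 Ω K ≤ ρB := le_max_left _ _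
    linarith
  have hslj : 0 < Real.sqrt lj := Real.sqrt_pos.2 hlj
  have hsli : 0 < Real.sqrt li := Real.sqrt_pos.2 hli
  have hrpow : 0 < lj ^ ((5:ℝ)/2) := Real.rpow_pos_of_pos hlj _
  have hDpos : 0 < lj ^ ((5:ℝ)/2) * Real.sqrt li * δ ^ 6 := by positivity
  have hD5pos : 0 < lj ^ ((5:ℝ)/2) * Real.sqrt li * δ ^ 5 := by positivity
  have hCpos : 0 < C := by rw [hCdef]; nlinarith [mul_nonneg (mul_nonneg (pow_pos hBpos 6).le hI0) (le_trans zero_le_one hρB1)]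
  set s : Set E3 := Ω \ Metric.ball aj δ with hsdef
  have hs_meas : MeasurableSet s := hΩo.measurableSet.diff measurableSet_ball
  set F : E3 → ℝ := fun x => (bsBubble c₀ χ G δ aj lj x) ^ 5 * bsBubble c₀ χ G δ ai li x
    with hFdef
  by_cases hfint : IntegrableOn F s volume
  · -- dominating function
    set M : ℝ := B^6 / (lj ^ ((5:ℝ)/2) * Real.sqrt li * δ ^ 5) with hMdef
    have hMpos : 0 < M := div_pos (pow_pos hBpos 6) hD5pos
    set g : E3 → ℝ := fun x => M * boxFn r₀ (x - ai) with hgdef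
    have hg_int : Integrable g volume :=
      (Integrable.comp_sub_right (integrable_boxFn hr₀) ai).const_mul M
    have hg_nonneg : ∀ x, 0 ≤ g x := fun x =>
      mul_nonneg hMpos.le (boxFn_nonneg r₀ _)
    have hsqrt5 : Real.sqrt lj ^ (5:ℕ) = lj ^ ((5:ℝ)/2) := by
      rw [Real.sqrt_eq_rpow, ← Real.rpow_natCast (lj ^ ((1:ℝ)/2)) 5, ← Real.rpow_mul hlj.le]
      norm_num
    have hMeq : (B / (Real.sqrt lj * δ)) ^ (5:ℕ) * (B / Real.sqrt li) = M := by
      rw [hMdef, ← hsqrt5]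
      field_simp
    have hae : ∀ᵐ x : E3, x ∈ s → F x ≤ g x := by
      filter_upwards [ae_coords ai] with x hx hxs
      have hxΩ : x ∈ Ω := hxs.1
      have hxball : δ ≤ ‖x - aj‖ := by
        have := hxs.2
        rw [Metric.mem_ball, dist_eq_norm] at this
        linarith [not_lt.1 this]
      have hxai : x ≠ ai := by
        intro h
        exact hx 0 (by rw [h])
      have hxaj : x ≠ aj := by
        intro h
        rw [h, sub_self, norm_zero] at hxball
        linarith
      have huj : bsBubble c₀ χ G δ aj lj x ≤ B / (Real.sqrt lj * δ) := by
        refine (hbub_le aj (hKΩ haj) lj hlj δ x hxΩ hxaj).trans ?_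
        apply div_le_div_of_nonneg_left hBpos.le (by positivity)
        exact mul_le_mul_of_nonneg_left hxball hslj.le
      have huj5 : (bsBubble c₀ χ G δ aj lj x) ^ 5 ≤ (B / (Real.sqrt lj * δ)) ^ 5 :=
        pow_le_pow_left₀ (hbub_nonneg aj (hKΩ haj) lj hlj δ x hxΩ) huj 5
      have hui : bsBubble c₀ χ G δ ai li x ≤ (B / Real.sqrt li) * boxFn r₀ (x - ai) := by
        refine (hbub_le ai (hKΩ hai) li hli δ x hxΩ hxai).trans ?_
        have hcoords : ∀ i, (x - ai) i ≠ 0 := by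
          intro i
          have : (x - ai) i = x i - ai i := rfl
          rw [this]
          exact sub_ne_zero_of_ne (hx i)
        have hnm : ‖x - ai‖ ≤ r₀ := by
          have := hdiam x hxΩ ai (hKΩ hai)
          rw [hr₀def]; linarith
        have hinv := inv_norm_le_boxFn (x - ai) hcoords hnm
        calc B / (Real.sqrt li * ‖x - ai‖) = (B / Real.sqrt li) * ‖x - ai‖⁻¹ := by
              rw [div_mul_eq_div_div, div_eq_mul_inv]
          _ ≤ (B / Real.sqrt li) * boxFn r₀ (x - ai) :=
              mul_le_mul_of_nonneg_left hinv (by positivity)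
      calc F x ≤ (B / (Real.sqrt lj * δ)) ^ 5 * ((B / Real.sqrt li) * boxFn r₀ (x - ai)) := by
            apply mul_le_mul huj5 hui (hbub_nonneg ai (hKΩ hai) li hli δ x hxΩ) (by positivity)
        _ = M * boxFn r₀ (x - ai) := by rw [← hMeq]; ring
        _ = g x := rfl
    have step1 : ∫ x in s, F x ≤ ∫ x in s, g x :=
      setIntegral_mono_on_ae hfint hg_int.integrableOn hs_meas hae
    have step2 : ∫ x in s, g x ≤ ∫ x, g x :=
      setIntegral_le_integral hg_int (ae_of_all _ hg_nonneg)
    have step3 : ∫ x, g x = M * I0 := by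
      rw [hgdef]
      rw [integral_const_mul]
      congr 1
      exact integral_sub_right_eq_self (boxFn r₀) ai
    have step4 : M * I0 ≤ C / (lj ^ ((5:ℝ)/2) * Real.sqrt li * δ ^ 6) := by
      rw [hMdef, div_mul_eq_mul_div, div_le_div_iff₀ hD5pos hDpos]
      have h1 : B^6 * I0 * δ ≤ C := by
        have h2 : B^6 * I0 * δ ≤ B^6 * I0 * ρB :=
          mul_le_mul_of_nonneg_left hδρB (by positivity)
        rw [hCdef]; linarith
      calc B ^ 6 * I0 * (lj ^ ((5:ℝ)/2) * Real.sqrt li * δ ^ 6)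
          = (B^6 * I0 * δ) * (lj ^ ((5:ℝ)/2) * Real.sqrt li * δ ^ 5) := by ring
        _ ≤ C * (lj ^ ((5:ℝ)/2) * Real.sqrt li * δ ^ 5) :=
            mul_le_mul_of_nonneg_right h1 hD5pos.le
    calc ∫ x in s, F x ≤ ∫ x, g x := step1.trans step2
      _ = M * I0 := step3
      _ ≤ _ := step4
  · rw [integral_undef hfint]
    positivity
end
end

section
/- There exists a universal constant C > 0 such that for all a_i, a_j ∈ ℝ³, all δ > 0, and all λ_i, λ_j > 0, one has ∫_{{|x−a_j| ≤ 4δ}} (λ_j/(1+λ_j²|x−a_j|²))^{1/2}·(λ_i/(1+λ_i²|x−a_i|²))^{1/2} dx ≤ C·δ²·(λ_i/λ_j + λ_iλ_j|a_i−a_j|²)^{−1/2}. -/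
open MeasureTheory Metric Set Filter Topology Bornology
open scoped InnerProductSpace

noncomputable section

/-! Write `r = |x - aⱼ|`, `s = |x - aᵢ|` and `d = |aᵢ - aⱼ|`. The triangle inequality `d ≤ r + s`
bounds the product of the two bubbles by `(2/s + 1/r) / √(λᵢ/λⱼ + λᵢλⱼd²)`. In polar coordinates
`∫_{B(a,R)} |x - a|⁻¹ dx = (3/2) |B₁| R²`, and on an off-centre ball `B(b,R)` the integrand
`|x - a|⁻¹` is at most `R⁻¹` outside `B(a,R)`; so both terms integrate over `B(aⱼ, 4δ)` to
`O(δ²)`. -/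

section InverseDistance

open Module

lemma pow_smul_indicator_inv_eqOn {n : ℕ} (hn : 2 ≤ n) (R : ℝ) :
    EqOn (fun y : ℝ => y ^ (n - 1) • (Iic R).indicator (fun y => y⁻¹) y)
      ((Ioc 0 R).indicator fun y => y ^ (n - 2)) (Ioi 0) := by
  intro y (hy : 0 < y)
  by_cases hyR : y ≤ R
  · have : y ^ (n - 1) = y ^ (n - 2) * y := by rw [← pow_succ]; congr 1; omega
    simp [hyR, hy, this, hy.ne']
  · simp [hyR]

lemma integrableOn_Ioi_pow_smul_indicator_inv {n : ℕ} (hn : 2 ≤ n) (R : ℝ) :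
    IntegrableOn (fun y : ℝ => y ^ (n - 1) • (Iic R).indicator (fun y => y⁻¹) y) (Ioi 0) := by
  rw [integrableOn_congr_fun (pow_smul_indicator_inv_eqOn hn R) measurableSet_Ioi]
  exact ((integrable_indicator_iff measurableSet_Ioc).2
    ((continuous_pow _).integrableOn_Icc.mono_set Ioc_subset_Icc_self)).integrableOn

lemma integral_Ioi_pow_smul_indicator_inv {n : ℕ} (hn : 2 ≤ n) {R : ℝ} (hR : 0 ≤ R) :
    ∫ y in Ioi (0 : ℝ), y ^ (n - 1) • (Iic R).indicator (fun y => y⁻¹) y =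
      R ^ (n - 1) / (n - 1 : ℕ) := by
  rw [setIntegral_congr_fun measurableSet_Ioi (pow_smul_indicator_inv_eqOn hn R),
    integral_indicator measurableSet_Ioc, Measure.restrict_restrict measurableSet_Ioc,
    Ioc_inter_Ioi, max_self, ← intervalIntegral.integral_of_le hR, integral_pow]
  have h : n - 2 + 1 = n - 1 := by omega
  rw [h, zero_pow (by omega), sub_zero, ← Nat.cast_add_one, h]

variable {E : Type*} [NormedAddCommGroup E]

lemma indicator_closedBall_inv_norm_sub (a : E) (R : ℝ) :
    (closedBall a R).indicator (fun x => ‖x - a‖⁻¹) =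
      fun x => (Iic R).indicator (fun y : ℝ => y⁻¹) ‖x - a‖ := by
  ext x
  simp [indicator, dist_eq_norm]

lemma inv_norm_sub_le_indicator_add (a x : E) {R : ℝ} (hR : 0 < R) :
    ‖x - a‖⁻¹ ≤ (closedBall a R).indicator (fun x => ‖x - a‖⁻¹) x + R⁻¹ := by
  by_cases hx : ‖x - a‖ ≤ R
  · simp [dist_eq_norm, hx, hR.le]
  · rw [indicator_of_notMem (by simpa [dist_eq_norm] using hx), zero_add]
    exact inv_anti₀ hR (not_le.1 hx).le

variable [NormedSpace ℝ E] [FiniteDimensional ℝ E] [MeasurableSpace E] [BorelSpace E]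
  {μ : Measure E} [μ.IsAddHaarMeasure]

lemma integrableOn_closedBall_inv_norm_sub (hn : 2 ≤ finrank ℝ E) (a : E) (R : ℝ) :
    IntegrableOn (fun x => ‖x - a‖⁻¹) (closedBall a R) μ := by
  have : Nontrivial E := Module.nontrivial_of_finrank_pos (R := ℝ) (by omega)
  rw [← integrable_indicator_iff measurableSet_closedBall, indicator_closedBall_inv_norm_sub]
  exact ((integrable_fun_norm_addHaar μ).2
    (integrableOn_Ioi_pow_smul_indicator_inv hn R)).comp_sub_right a

lemma integral_closedBall_inv_norm_sub (hn : 2 ≤ finrank ℝ E) (a : E) {R : ℝ} (hR : 0 ≤ R) :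
    ∫ x in closedBall a R, ‖x - a‖⁻¹ ∂μ =
      finrank ℝ E / (finrank ℝ E - 1 : ℝ) * μ.real (ball 0 1) * R ^ (finrank ℝ E - 1) := by
  have : Nontrivial E := Module.nontrivial_of_finrank_pos (R := ℝ) (by omega)
  rw [← integral_indicator measurableSet_closedBall, indicator_closedBall_inv_norm_sub,
    integral_sub_right_eq_self (fun x => (Iic R).indicator (fun y : ℝ => y⁻¹) ‖x‖) a,
    integral_fun_norm_addHaar, integral_Ioi_pow_smul_indicator_inv hn hR,
    Nat.cast_sub (by omega)]
  simp only [nsmul_eq_mul, smul_eq_mul, Nat.cast_one]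
  ring

lemma integrableOn_inv_norm_sub_of_isBounded (hn : 2 ≤ finrank ℝ E) (a : E) {s : Set E}
    (hs : Bornology.IsBounded s) : IntegrableOn (fun x => ‖x - a‖⁻¹) s μ :=
  let ⟨R, hR⟩ := hs.subset_closedBall a
  (integrableOn_closedBall_inv_norm_sub hn a R).mono_set hR

lemma setIntegral_closedBall_inv_norm_sub_le (hn : 2 ≤ finrank ℝ E) (a b : E) {R : ℝ}
    (hR : 0 < R) :
    ∫ x in closedBall b R, ‖x - a‖⁻¹ ∂μ ≤
      (finrank ℝ E / (finrank ℝ E - 1 : ℝ) + 1) * μ.real (ball 0 1) * R ^ (finrank ℝ E - 1) := by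
  have hind : Integrable ((closedBall a R).indicator fun x => ‖x - a‖⁻¹) μ :=
    (integrable_indicator_iff measurableSet_closedBall).2
      (integrableOn_closedBall_inv_norm_sub hn a R)
  have hpow : R ^ finrank ℝ E = R * R ^ (finrank ℝ E - 1) := by
    rw [← pow_succ']; congr 1; omega
  calc ∫ x in closedBall b R, ‖x - a‖⁻¹ ∂μ
      ≤ ∫ x in closedBall b R, ((closedBall a R).indicator (fun x => ‖x - a‖⁻¹) x + R⁻¹) ∂μ :=
        setIntegral_mono (integrableOn_inv_norm_sub_of_isBounded hn a isBounded_closedBall)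
          (hind.integrableOn.add (integrableOn_const measure_closedBall_lt_top.ne))
          fun x => inv_norm_sub_le_indicator_add a x hR
    _ = ∫ x in closedBall b R, (closedBall a R).indicator (fun x => ‖x - a‖⁻¹) x ∂μ
          + R⁻¹ * μ.real (closedBall b R) := by
        rw [integral_add hind.integrableOn (integrableOn_const measure_closedBall_lt_top.ne),
          setIntegral_const, smul_eq_mul, mul_comm]
    _ ≤ ∫ x in closedBall a R, ‖x - a‖⁻¹ ∂μ + R⁻¹ * μ.real (closedBall b R) := by
        gcongr
        exact (setIntegral_le_integral hind (.of_forall fun x => indicator_nonneg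
          (fun _ _ => by positivity) x)).trans_eq (integral_indicator measurableSet_closedBall)
    _ = _ := by
        rw [integral_closedBall_inv_norm_sub hn a hR.le, Measure.addHaar_real_closedBall μ b hR.le,
          hpow]
        field_simp

end InverseDistance

lemma sqrt_bubble_mul_sqrt_bubble_le {li lj r s d : ℝ} (hli : 0 < li) (hlj : 0 < lj) (hr : 0 < r)
    (hs : 0 < s) (hd₀ : 0 ≤ d) (hd : d ≤ r + s) :
    Real.sqrt (lj / (1 + lj ^ 2 * r ^ 2)) * Real.sqrt (li / (1 + li ^ 2 * s ^ 2)) ≤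
      (2 * s⁻¹ + r⁻¹) / Real.sqrt (li / lj + li * lj * d ^ 2) := by
  have key : lj / (1 + lj ^ 2 * r ^ 2) * (li / (1 + li ^ 2 * s ^ 2)) *
      (li / lj + li * lj * d ^ 2) ≤ (2 * s⁻¹ + r⁻¹) ^ 2 := by
    rw [div_mul_div_comm, div_add' _ _ _ hlj.ne', div_mul_div_comm, div_le_iff₀ (by positivity)]
    field_simp
    have hd2 : d ^ 2 ≤ (2 * r + s) ^ 2 := pow_le_pow_left₀ hd₀ (by linarith) 2
    have hr2 : r ^ 2 ≤ (2 * r + s) ^ 2 := pow_le_pow_left₀ hr.le (by linarith) 2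
    have hj : r ^ 2 * (1 + lj ^ 2 * d ^ 2) ≤ (2 * r + s) ^ 2 * (1 + lj ^ 2 * r ^ 2) := by
      nlinarith [mul_le_mul_of_nonneg_left hd2 (by positivity : 0 ≤ lj ^ 2 * r ^ 2)]
    have hi : li ^ 2 * s ^ 2 ≤ 1 + li ^ 2 * s ^ 2 := by linarith
    calc li ^ 2 * (1 + lj ^ 2 * d ^ 2) * s ^ 2 * r ^ 2
        = (li ^ 2 * s ^ 2) * (r ^ 2 * (1 + lj ^ 2 * d ^ 2)) := by ring
      _ ≤ (1 + li ^ 2 * s ^ 2) * ((2 * r + s) ^ 2 * (1 + lj ^ 2 * r ^ 2)) :=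
          mul_le_mul hi hj (by positivity) (by positivity)
      _ = _ := by ring
  rw [le_div_iff₀ (Real.sqrt_pos.2 (by positivity)), ← Real.sqrt_mul (by positivity),
    ← Real.sqrt_mul (by positivity), ← Real.sqrt_sq (by positivity : 0 ≤ 2 * s⁻¹ + r⁻¹)]
  exact Real.sqrt_le_sqrt key

/-- first standard-bubble interaction integral estimate, on the
ball `{|x - aj| ≤ 4δ}`. -/
theorem bubble_interaction_inner
    : ∃ C > (0 : ℝ), ∀ ai aj : E3, ∀ δ : ℝ, 0 < δ → ∀ li lj : ℝ, 0 < li → 0 < lj →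
      (∫ x in {x : E3 | ‖x - aj‖ ≤ 4 * δ},
          Real.sqrt (lj / (1 + lj ^ 2 * ‖x - aj‖ ^ 2)) *
          Real.sqrt (li / (1 + li ^ 2 * ‖x - ai‖ ^ 2))) ≤
        C * δ ^ 2 / Real.sqrt (li / lj + li * lj * ‖ai - aj‖ ^ 2) := by
  have hn : 2 ≤ Module.finrank ℝ E3 := by simp
  have hv : 0 < volume.real (ball (0 : E3) 1) :=
    ENNReal.toReal_pos (measure_ball_pos _ _ one_pos).ne' measure_ball_lt_top.ne
  refine ⟨104 * volume.real (ball (0 : E3) 1), by positivity, ?_⟩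
  intro ai aj δ hδ li lj hli hlj
  have hR : 0 < 4 * δ := by positivity
  have hoff := setIntegral_closedBall_inv_norm_sub_le (μ := volume) hn ai aj hR
  have hcen := integral_closedBall_inv_norm_sub (μ := volume) hn aj hR.le
  norm_num [finrank_euclideanSpace_fin] at hoff hcen
  set P := Real.sqrt (li / lj + li * lj * ‖ai - aj‖ ^ 2)
  set B := closedBall aj (4 * δ)
  have hB : {x : E3 | ‖x - aj‖ ≤ 4 * δ} = B := by ext; simp [B, dist_eq_norm]
  have hi : IntegrableOn (fun x => ‖x - ai‖⁻¹) B :=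
    integrableOn_inv_norm_sub_of_isBounded hn ai isBounded_closedBall
  have hj : IntegrableOn (fun x => ‖x - aj‖⁻¹) B := integrableOn_closedBall_inv_norm_sub hn aj _
  rw [hB]
  calc ∫ x in B, Real.sqrt (lj / (1 + lj ^ 2 * ‖x - aj‖ ^ 2)) *
          Real.sqrt (li / (1 + li ^ 2 * ‖x - ai‖ ^ 2))
      ≤ ∫ x in B, (2 * ‖x - ai‖⁻¹ + ‖x - aj‖⁻¹) / P := by
        refine setIntegral_mono_on_ae ?_ (((hi.const_mul 2).add hj).div_const P)
          measurableSet_closedBall ?_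
        · exact (Continuous.continuousOn (by fun_prop (disch := intro x; positivity)))
            |>.integrableOn_compact (isCompact_closedBall _ _)
        filter_upwards [Measure.ae_ne volume ai, Measure.ae_ne volume aj] with x hxi hxj _
        refine sqrt_bubble_mul_sqrt_bubble_le hli hlj (norm_pos_iff.2 (sub_ne_zero.2 hxj))
          (norm_pos_iff.2 (sub_ne_zero.2 hxi)) (norm_nonneg _) ?_
        simpa only [norm_sub_rev ai x, add_comm] using norm_sub_le_norm_sub_add_norm_sub ai x aj
    _ = ((2 * ∫ x in B, ‖x - ai‖⁻¹) + ∫ x in B, ‖x - aj‖⁻¹) / P := by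
        rw [integral_div, integral_add (hi.const_mul 2) hj, integral_const_mul]
    _ ≤ 104 * volume.real (ball (0 : E3) 1) * δ ^ 2 / P := by
        rw [hcen]
        gcongr ?_ / P
        linarith
end
end
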